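/- arXiv:2406.04246 — 6 statements merged into one kernel-verified Lean document; each statement's English description precedes it below -/
import Mathlib

section
/- Let P ∈ ℂ[z] with deg P = d ≥ 1, P(0) ≠ 0, and |P(z)| ≤ 1 for all z ∈ 𝕋. If Q₁, Q₂ ∈ ℂ[z] both have degree d, both have no roots in 𝔻, and both satisfy |P(z)|² + |Qᵢ(z)|² = 1 for all z ∈ 𝕋 (i = 1,2), then there exists c ∈ ℂ with |c| = 1 such that Q₂ = c·Q₁. -/
/-!
On the unit circle `z̄ = z⁻¹`, so with the conjugate reciprocal `Q*(z) = zᵈ · conj (Q (z̄⁻¹))`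
one has `Q(z) Q*(z) = zᵈ |Q(z)|²` there; hence `|Q₁| = |Q₂|` on the circle forces the polynomial
identity `Q₁ Q₁* = Q₂ Q₂*`. The roots of `Q*` are the reflections `ā⁻¹` of the roots `a` of `Q`.
If `Q₂` has no roots in the open disk, `Q₂*` has none outside it except those of `Q₂` on the
circle, so every root `a` of `Q₁` (necessarily `|a| ≥ 1`) is a root of `Q₂`. Cancelling `z - a`
and inducting on the degree gives `Q₂ = c Q₁`, and then `Q₁ Q₁* = |c|² Q₁ Q₁*` gives `|c| = 1`.
-/

open Polynomial ComplexConjugate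

theorem Complex.sphere_infinite (x : ℂ) {r : ℝ} (hr : 0 < r) : (Metric.sphere x r).Infinite := by
  refine (isPreconnected_sphere ?_ x r).infinite_of_nontrivial
    ⟨x + r, ?_, x - r, ?_, ?_⟩
  · rw [Complex.rank_real_complex]; norm_num
  iterate 2 · simp [abs_of_pos hr]
  · rw [Ne, sub_eq_add_neg, add_right_inj, self_eq_neg, Complex.ofReal_eq_zero]
    exact hr.ne'

namespace Polynomial

noncomputable def conjReverse (p : ℂ[X]) : ℂ[X] :=
  (p.map (starRingEnd ℂ)).reverse

theorem conjReverse_mul (p q : ℂ[X]) :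
    (p * q).conjReverse = p.conjReverse * q.conjReverse := by
  rw [conjReverse, Polynomial.map_mul, reverse_mul_of_domain]; rfl

@[simp]
theorem conjReverse_C (c : ℂ) : (C c).conjReverse = C (conj c) := by
  simp [conjReverse]

theorem conjReverse_ne_zero {p : ℂ[X]} (hp : p ≠ 0) : p.conjReverse ≠ 0 := by
  simpa [conjReverse] using hp

theorem eval_conjReverse (p : ℂ[X]) {z : ℂ} (hz : z ≠ 0) :
    p.conjReverse.eval z = z ^ p.natDegree * conj (p.eval (conj z)⁻¹) := by
  let := invertibleOfNonzero (inv_ne_zero hz)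
  have h := eval₂_reverse_mul_pow (RingHom.id ℂ) z⁻¹ (p.map (starRingEnd ℂ))
  have hconj : eval₂ (starRingEnd ℂ) z⁻¹ p = conj (p.eval (conj z)⁻¹) := by
    rw [← map_inv₀, ← eval₂_at_apply, Complex.conj_conj]
  rw [invOf_eq_inv, inv_inv, eval₂_id, eval₂_id, natDegree_map, eval_map, hconj] at h
  rw [conjReverse, ← h, mul_left_comm, ← mul_pow, mul_inv_cancel₀ hz, one_pow, mul_one]

theorem eval_mul_conjReverse_of_norm_eq_one (p : ℂ[X]) {z : ℂ} (hz : ‖z‖ = 1) :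
    (p * p.conjReverse).eval z = z ^ p.natDegree * (‖p.eval z‖ : ℂ) ^ 2 := by
  have hz0 : z ≠ 0 := by rintro rfl; simp at hz
  rw [eval_mul, eval_conjReverse p hz0, ← Complex.inv_eq_conj hz, inv_inv, mul_left_comm,
    Complex.mul_conj']

theorem mul_conjReverse_eq_of_norm_eval_eq {p q : ℂ[X]} (hdeg : p.natDegree = q.natDegree)
    (hnorm : ∀ z : ℂ, ‖z‖ = 1 → ‖p.eval z‖ = ‖q.eval z‖) :
    p * p.conjReverse = q * q.conjReverse := by
  refine eq_of_infinite_eval_eq _ _ ((Complex.sphere_infinite 0 one_pos).mono fun z hz => ?_)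
  rw [mem_sphere_zero_iff_norm] at hz
  rw [Set.mem_ofPred_eq, eval_mul_conjReverse_of_norm_eq_one p hz,
    eval_mul_conjReverse_of_norm_eq_one q hz, hdeg, hnorm z hz]

theorem eval_conjReverse_ne_zero {p : ℂ[X]} (hp : ∀ z : ℂ, ‖z‖ < 1 → p.eval z ≠ 0) {a : ℂ}
    (ha : 1 ≤ ‖a‖) (hpa : p.eval a ≠ 0) : p.conjReverse.eval a ≠ 0 := by
  have ha0 : a ≠ 0 := norm_pos_iff.mp (by linarith)
  rw [eval_conjReverse p ha0]
  refine mul_ne_zero (pow_ne_zero _ ha0) ((_root_.map_ne_zero _).mpr ?_)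
  rcases ha.lt_or_eq with ha | ha
  · exact hp _ (by rwa [norm_inv, Complex.norm_conj, inv_lt_one₀ (by linarith)])
  · rwa [← Complex.inv_eq_conj ha.symm, inv_inv]

theorem isRoot_of_mul_conjReverse_eq {p q : ℂ[X]} (hq : ∀ z : ℂ, ‖z‖ < 1 → q.eval z ≠ 0)
    (h : p * p.conjReverse = q * q.conjReverse) {a : ℂ} (ha : 1 ≤ ‖a‖) (hpa : p.IsRoot a) :
    q.IsRoot a := by
  by_contra hqa
  have hqa' := congrArg (eval a) h
  rw [eval_mul, eval_mul, hpa.eq_zero, zero_mul] at hqa'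
  exact mul_ne_zero hqa (eval_conjReverse_ne_zero hq ha hqa) hqa'.symm

theorem ne_zero_of_forall_norm_lt_one_eval_ne_zero {p : ℂ[X]}
    (hp : ∀ z : ℂ, ‖z‖ < 1 → p.eval z ≠ 0) : p ≠ 0 := by
  rintro rfl
  exact hp 0 (by simp) eval_zero

theorem eq_C_mul_of_mul_conjReverse_eq {p q : ℂ[X]} (hp : ∀ z : ℂ, ‖z‖ < 1 → p.eval z ≠ 0)
    (hq : ∀ z : ℂ, ‖z‖ < 1 → q.eval z ≠ 0) (hdeg : p.natDegree = q.natDegree)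
    (h : p * p.conjReverse = q * q.conjReverse) : ∃ c, q = C c * p := by
  induction hn : p.natDegree generalizing p q with
  | zero =>
    obtain ⟨a, rfl⟩ := natDegree_eq_zero.mp hn
    obtain ⟨b, rfl⟩ := natDegree_eq_zero.mp (hdeg ▸ hn)
    have ha : a ≠ 0 := by simpa using hp 0 (by simp)
    exact ⟨b / a, by rw [← C_mul, div_mul_cancel₀ b ha]⟩
  | succ n ih =>
    obtain ⟨a, hpa⟩ := Complex.exists_root (f := p) (by
      rw [degree_eq_natDegree (ne_zero_of_forall_norm_lt_one_eval_ne_zero hp), hn]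
      exact_mod_cast n.succ_pos)
    have ha : 1 ≤ ‖a‖ := not_lt.mp fun h => hp a h hpa
    obtain ⟨p', rfl⟩ := dvd_iff_isRoot.mpr hpa
    obtain ⟨q', rfl⟩ := dvd_iff_isRoot.mpr (isRoot_of_mul_conjReverse_eq hq h ha hpa)
    have hp' : ∀ z : ℂ, ‖z‖ < 1 → p'.eval z ≠ 0 := fun z hz h0 => hp z hz (by simp [h0])
    have hq' : ∀ z : ℂ, ‖z‖ < 1 → q'.eval z ≠ 0 := fun z hz h0 => hq z hz (by simp [h0])
    have hp'0 := ne_zero_of_forall_norm_lt_one_eval_ne_zero hp'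
    have hq'0 := ne_zero_of_forall_norm_lt_one_eval_ne_zero hq'
    rw [natDegree_mul (X_sub_C_ne_zero a) hp'0, natDegree_mul (X_sub_C_ne_zero a) hq'0,
      natDegree_X_sub_C] at hdeg
    rw [natDegree_mul (X_sub_C_ne_zero a) hp'0, natDegree_X_sub_C] at hn
    have h' : p' * p'.conjReverse = q' * q'.conjReverse := by
      rw [conjReverse_mul, conjReverse_mul, mul_mul_mul_comm (X - C a) p',
        mul_mul_mul_comm (X - C a) q'] at h
      exact mul_left_cancel₀ (mul_ne_zero (X_sub_C_ne_zero a)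
        (conjReverse_ne_zero (X_sub_C_ne_zero a))) h
    obtain ⟨c, rfl⟩ := ih hp' hq' (by omega) h' (by omega)
    exact ⟨c, mul_left_comm _ _ _⟩

theorem norm_eq_one_of_mul_conjReverse_eq_C_mul {p : ℂ[X]} (hp : p ≠ 0) {c : ℂ}
    (h : p * p.conjReverse = C c * p * (C c * p).conjReverse) : ‖c‖ = 1 := by
  have hpp : p * p.conjReverse ≠ 0 := mul_ne_zero hp (conjReverse_ne_zero hp)
  rw [conjReverse_mul, conjReverse_C, mul_mul_mul_comm, ← C_mul, Complex.mul_conj', eq_comm,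
    mul_eq_right₀ hpp, ← C_1, C_inj] at h
  exact (pow_eq_one_iff_of_nonneg (norm_nonneg c) two_ne_zero).mp (by exact_mod_cast h)

end Polynomial

theorem canonical_complementary_polynomial_unique_general
    (d : ℕ) (P : Polynomial ℂ)
    (Q₁ Q₂ : Polynomial ℂ)
    (hQ₁deg : Q₁.natDegree = d) (hQ₂deg : Q₂.natDegree = d)
    (hQ₁roots : ∀ z : ℂ, ‖z‖ < 1 → Q₁.eval z ≠ 0)
    (hQ₂roots : ∀ z : ℂ, ‖z‖ < 1 → Q₂.eval z ≠ 0)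
    (hQ₁ : ∀ z : ℂ, ‖z‖ = 1 →
      ‖P.eval z‖ ^ 2 + ‖Q₁.eval z‖ ^ 2 = 1)
    (hQ₂ : ∀ z : ℂ, ‖z‖ = 1 →
      ‖P.eval z‖ ^ 2 + ‖Q₂.eval z‖ ^ 2 = 1) :
    ∃ c : ℂ, ‖c‖ = 1 ∧ Q₂ = Polynomial.C c * Q₁ := by
  have hnorm : ∀ z : ℂ, ‖z‖ = 1 → ‖Q₁.eval z‖ = ‖Q₂.eval z‖ := fun z hz =>
    (pow_left_inj₀ (norm_nonneg _) (norm_nonneg _) two_ne_zero).mp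
      (by linarith [hQ₁ z hz, hQ₂ z hz])
  have hdeg : Q₁.natDegree = Q₂.natDegree := hQ₁deg.trans hQ₂deg.symm
  have h := mul_conjReverse_eq_of_norm_eval_eq hdeg hnorm
  obtain ⟨c, rfl⟩ := eq_C_mul_of_mul_conjReverse_eq hQ₁roots hQ₂roots hdeg h
  exact ⟨c, norm_eq_one_of_mul_conjReverse_eq_C_mul
    (ne_zero_of_forall_norm_lt_one_eval_ne_zero hQ₁roots) h, rfl⟩

/-- **Uniqueness of the canonical complementary polynomial up to a multiplicative
phase.** If `P ∈ ℂ[z]` has `deg P = d ≥ 1`, `P(0) ≠ 0`, and `|P| ≤ 1` on the unit circle,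
and `Q₁, Q₂` are both degree-`d` complementary polynomials to `P` with no roots in the
open unit disk, then `Q₂ = c Q₁` for some unimodular constant `c`. -/
theorem canonical_complementary_polynomial_unique
    (d : ℕ) (hd : 1 ≤ d) (P : Polynomial ℂ) (hdeg : P.natDegree = d)
    (hP0 : P.eval 0 ≠ 0)
    (hP : ∀ z : ℂ, ‖z‖ = 1 → ‖P.eval z‖ ≤ 1)
    (Q₁ Q₂ : Polynomial ℂ)
    (hQ₁deg : Q₁.natDegree = d) (hQ₂deg : Q₂.natDegree = d)
    (hQ₁roots : ∀ z : ℂ, ‖z‖ < 1 → Q₁.eval z ≠ 0)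
    (hQ₂roots : ∀ z : ℂ, ‖z‖ < 1 → Q₂.eval z ≠ 0)
    (hQ₁ : ∀ z : ℂ, ‖z‖ = 1 →
      ‖P.eval z‖ ^ 2 + ‖Q₁.eval z‖ ^ 2 = 1)
    (hQ₂ : ∀ z : ℂ, ‖z‖ = 1 →
      ‖P.eval z‖ ^ 2 + ‖Q₂.eval z‖ ^ 2 = 1) :
    ∃ c : ℂ, ‖c‖ = 1 ∧ Q₂ = Polynomial.C c * Q₁ :=
  canonical_complementary_polynomial_unique_general d P Q₁ Q₂ hQ₁deg hQ₂deg hQ₁roots hQ₂roots hQ₁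
    hQ₂
end

section
/- Let P ∈ ℂ[z] be a polynomial all of whose coefficients are real, with deg P = d ≥ 1, P(0) ≠ 0, and |P(z)| ≤ 1 for all z ∈ 𝕋. Then there exists a polynomial Q ∈ ℂ[z] all of whose coefficients are real, with deg Q = d, with no roots in 𝔻, and satisfying |P(z)|² + |Q(z)|² = 1 for all z ∈ 𝕋. -/
/-!
Put `n = deg P` and `F = z ^ n - P(z) P^rev(z)`. Since `P` is real and `P(0) ≠ 0`, `F` has
degree `2n`, real coefficients, is self-reciprocal (`F^rev = F`), and on the unit circle equals
`z ^ n (1 - |P(z)|²)`. Hence the roots of `F` are stable under conjugation and under `r ↦ 1 / r`,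
so under the reflection `r ↦ 1 / conj r` in the circle, and the roots on the circle have even
multiplicity because `F / z ^ n ≥ 0` there. The roots outside the disk together with half of
those on the circle are conjugation-stable and span a real polynomial `Q₀` of degree `n`; since
`|z - 1 / conj r| = |z - r| / |r|` on the circle, `|F| = c |Q₀|²` there for a constant `c > 0`,
and `Q = √c Q₀` is the complementary polynomial.
-/

open Polynomial ComplexConjugate
open scoped ComplexOrder

namespace Multiset

variable {α : Type*} [DecidableEq α]

noncomputable def half (s : Multiset α) : Multiset α :=
  Finsupp.toMultiset (s.toFinsupp.mapRange (· / 2) (Nat.zero_div 2))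

theorem count_half (s : Multiset α) (a : α) : s.half.count a = s.count a / 2 := by
  simp [half, Finsupp.count_toMultiset]

theorem count_map_of_involutive {f : α → α} (hf : Function.Involutive f) (s : Multiset α)
    (a : α) : (s.map f).count a = s.count (f a) := by
  conv_lhs => rw [← hf a]
  exact count_map_eq_count' f s hf.injective (f a)

end Multiset

namespace Polynomial

section Reverse

variable {K : Type*} [Field K]

theorem eval_reverse (p : K[X]) {z : K} (hz : z ≠ 0) :
    p.reverse.eval z = z ^ p.natDegree * p.eval z⁻¹ := by
  have : Invertible z⁻¹ := invertibleOfNonzero (inv_ne_zero hz)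
  have h := eval₂_reverse_mul_pow (RingHom.id K) z⁻¹ p
  rw [invOf_eq_inv, inv_inv] at h
  change p.reverse.eval z * z⁻¹ ^ p.natDegree = p.eval z⁻¹ at h
  rw [← h, mul_left_comm, ← mul_pow, mul_inv_cancel₀ hz, one_pow, mul_one]

theorem reverse_multiset_prod {R : Type*} [CommSemiring R] [NoZeroDivisors R]
    (s : Multiset R[X]) : s.prod.reverse = (s.map reverse).prod := by
  induction s using Multiset.induction_on with
  | empty => simpa using reverse_C (1 : R)
  | cons p s ih => simp [reverse_mul_of_domain, ih]

theorem reverse_X_sub_C {r : K} (hr : r ≠ 0) : (X - C r).reverse = C (-r) * (X - C r⁻¹) := by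
  have hX : (X : K[X]).reverse = 1 := by
    rw [← one_mul (X : K[X]), reverse_mul_X, ← C_1, reverse_C]
  rw [sub_eq_add_neg, ← C_neg, reverse_add_C]
  simp [hX, mul_sub, ← C_mul, hr]
  ring

theorem roots_reverse {p : K[X]} (hp : p.Splits) (h0 : p.coeff 0 ≠ 0) :
    p.reverse.roots = p.roots.map (·⁻¹) := by
  have hroots : ∀ r ∈ p.roots, r ≠ 0 := by
    rintro r hr rfl
    exact h0 (coeff_zero_eq_eval_zero p ▸ (mem_roots'.mp hr).2)
  have hlc : p.leadingCoeff ≠ 0 := fun h => h0 (by simp [leadingCoeff_eq_zero.mp h])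
  have hprod : (p.roots.map (-·)).prod ≠ 0 :=
    Multiset.prod_ne_zero fun h => hroots 0 (by simpa using h) rfl
  have hfactor : (p.roots.map fun r => (X - C r).reverse).prod =
      C (p.roots.map (-·)).prod * ((p.roots.map (·⁻¹)).map fun r => X - C r).prod := by
    rw [Multiset.map_congr rfl fun r hr => reverse_X_sub_C (hroots r hr), Multiset.prod_map_mul,
      Multiset.map_map, map_multiset_prod, Multiset.map_map]
    rfl
  conv_lhs => rw [hp.eq_prod_roots]
  rw [reverse_mul_of_domain, reverse_C, reverse_multiset_prod, Multiset.map_map,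
    Function.comp_def, hfactor, ← mul_assoc, ← C_mul, roots_C_mul _ (mul_ne_zero hlc hprod), roots_multiset_prod_X_sub_C]

end Reverse

theorem map_prod_X_sub_C {R S : Type*} [CommRing R] [CommRing S] (f : R →+* S)
    (s : Multiset R) :
    (s.map fun r => X - C r).prod.map f = ((s.map f).map fun r => X - C r).prod := by
  simp [Polynomial.map_multiset_prod, Multiset.map_map]

theorem norm_eval_prod_X_sub_C {K : Type*} [NormedField K] (s : Multiset K) (z : K) :
    ‖(s.map fun r => X - C r).prod.eval z‖ = (s.map fun r => ‖z - r‖).prod := by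
  rw [eval_multiset_prod, ← normHom_apply, map_multiset_prod, Multiset.map_map,
    Multiset.map_map]
  simp [Function.comp_def]

section CircleDefect

variable {R : Type*} [CommRing R] [IsDomain R] {P : R[X]}

noncomputable def circleDefect (P : R[X]) : R[X] := X ^ P.natDegree - P * P.reverse

theorem natDegree_mul_reverse (h0 : P.coeff 0 ≠ 0) :
    (P * P.reverse).natDegree = 2 * P.natDegree := by
  have hP : P ≠ 0 := fun h => h0 (by simp [h])
  rw [natDegree_mul hP (reverse_eq_zero.not.mpr hP), reverse_natDegree,
    natTrailingDegree_eq_zero.mpr (Or.inr h0), Nat.sub_zero, two_mul]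

theorem natDegree_circleDefect (hn : 1 ≤ P.natDegree) (h0 : P.coeff 0 ≠ 0) :
    (circleDefect P).natDegree = 2 * P.natDegree := by
  rw [circleDefect, natDegree_sub_eq_right_of_natDegree_lt, natDegree_mul_reverse h0]
  rw [natDegree_X_pow, natDegree_mul_reverse h0]
  omega

theorem coeff_zero_circleDefect (hn : 1 ≤ P.natDegree) (h0 : P.coeff 0 ≠ 0) :
    (circleDefect P).coeff 0 ≠ 0 := by
  have hP : P ≠ 0 := fun h => h0 (by simp [h])
  rw [circleDefect, coeff_sub, coeff_X_pow, if_neg (by omega), mul_coeff_zero, coeff_zero_reverse,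
    zero_sub, neg_ne_zero]
  exact mul_ne_zero h0 (leadingCoeff_ne_zero.mpr hP)

theorem reverse_circleDefect (hn : 1 ≤ P.natDegree) (h0 : P.coeff 0 ≠ 0) :
    (circleDefect P).reverse = circleDefect P := by
  rw [reverse, natDegree_circleDefect hn h0, circleDefect, reflect_sub, reflect_monomial,
    revAt_le (by omega), two_mul, reflect_mul _ _ le_rfl (reverse_natDegree_le P), reverse,
    reflect_reflect, mul_comm, Nat.add_sub_cancel]

end CircleDefect

section RealPolynomial

variable {P : ℂ[X]}

theorem map_conj_eq_self_iff : P.map conj = P ↔ ∀ n, (P.coeff n).im = 0 := by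
  simp [Polynomial.ext_iff, Complex.conj_eq_iff_im]

theorem eval_conj_of_map_conj_eq_self (hP : P.map conj = P) (z : ℂ) :
    P.eval (conj z) = conj (P.eval z) := by
  conv_lhs => rw [← hP]
  rw [eval_map, eval₂_at_apply]

theorem eval_reverse_of_norm_eq_one (hP : P.map conj = P) {z : ℂ} (hz : ‖z‖ = 1) :
    P.reverse.eval z = z ^ P.natDegree * conj (P.eval z) := by
  have hz0 : z ≠ 0 := norm_ne_zero_iff.mp (by simp [hz])
  rw [eval_reverse P hz0, Complex.inv_eq_conj hz, eval_conj_of_map_conj_eq_self hP]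

theorem map_conj_circleDefect (hP : P.map conj = P) :
    (circleDefect P).map conj = circleDefect P := by
  have hrev : P.reverse.map conj = P.reverse := map_conj_eq_self_iff.mpr fun n => by
    rw [coeff_reverse]
    exact map_conj_eq_self_iff.mp hP _
  simp only [circleDefect, Polynomial.map_sub, Polynomial.map_pow, map_X, Polynomial.map_mul, hP,
    hrev]

theorem eval_circleDefect_of_norm_eq_one (hP : P.map conj = P) {z : ℂ} (hz : ‖z‖ = 1) :
    (circleDefect P).eval z = z ^ P.natDegree * (1 - ‖P.eval z‖ ^ 2 : ℝ) := by
  rw [circleDefect, eval_sub, eval_pow, eval_X, eval_mul, eval_reverse_of_norm_eq_one hP hz]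
  push_cast
  rw [← Complex.mul_conj']
  ring

end RealPolynomial

end Polynomial

theorem eq_zero_of_forall_nonneg_pow_mul {h : ℝ → ℂ} (hh : ContinuousAt h 0) {m : ℕ}
    (hm : Odd m) (hnn : ∀ t : ℝ, 0 ≤ (t : ℂ) ^ m * h t) : h 0 = 0 := by
  have hdiv : ∀ t : ℝ, t ≠ 0 → h t = ((t ^ m)⁻¹ : ℝ) * ((t : ℂ) ^ m * h t) := fun t ht => by
    push_cast
    rw [inv_mul_cancel_left₀ (pow_ne_zero _ (Complex.ofReal_ne_zero.mpr ht))]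
  have hright : ∀ t > (0 : ℝ), 0 ≤ h t := fun t ht => by
    rw [hdiv t ht.ne']
    exact mul_nonneg (by exact_mod_cast (inv_pos.mpr (pow_pos ht m)).le) (hnn t)
  have hleft : ∀ t < (0 : ℝ), h t ≤ 0 := fun t ht => by
    rw [hdiv t ht.ne]
    exact mul_nonpos_of_nonpos_of_nonneg
      (by exact_mod_cast (inv_lt_zero.mpr (hm.pow_neg ht)).le) (hnn t)
  refine le_antisymm ?_ ?_
  · exact le_of_tendsto (hh.tendsto.mono_left (nhdsWithin_le_nhds (s := Set.Iio 0)))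
      (eventually_nhdsWithin_of_forall hleft)
  · exact ge_of_tendsto (hh.tendsto.mono_left (nhdsWithin_le_nhds (s := Set.Ioi 0)))
      (eventually_nhdsWithin_of_forall hright)

theorem even_rootMultiplicity_of_nonneg_on_circle {F : ℂ[X]} (hF : F ≠ 0) {d : ℕ}
    (hnn : ∀ z : ℂ, ‖z‖ = 1 → 0 ≤ F.eval z / z ^ d) {w : ℂ} (hw : ‖w‖ = 1) :
    Even (F.rootMultiplicity w) := by
  by_contra hodd
  set m := F.rootMultiplicity w
  set G := F /ₘ (X - C w) ^ m
  have hw0 : w ≠ 0 := by rintro rfl; simp at hw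
  have hden : ∀ t : ℝ, 1 - t * Complex.I ≠ 0 := fun t h => by
    simpa using congrArg Complex.re h
  -- Cayley parametrisation of the circle: `u 0 = w`, and `u t - w` is `t` times a unit.
  set u : ℝ → ℂ := fun t => w * (1 + t * Complex.I) / (1 - t * Complex.I)
  have hu : ∀ t, ‖u t‖ = 1 := fun t => by
    have : 1 - t * Complex.I = conj (1 + t * Complex.I) := by simp [sub_eq_add_neg]
    rw [norm_div, norm_mul, hw, this, Complex.norm_conj, one_mul,
      div_self (by rw [← Complex.norm_conj, ← this]; exact norm_ne_zero_iff.mpr (hden t))]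
  have hucont : Continuous u := by
    fun_prop (disch := exact hden _)
  have hsub : ∀ t : ℝ, u t - w = t * (2 * Complex.I * w / (1 - t * Complex.I)) := fun t => by
    simp only [u]
    field_simp [hden t]
    ring
  set h : ℝ → ℂ := fun t => (2 * Complex.I * w / (1 - t * Complex.I)) ^ m * G.eval (u t) / u t ^ d
  have hcont : Continuous h :=
    (((continuous_const.div (by fun_prop) hden).pow m).mul (G.continuous.comp hucont)).div
      (hucont.pow d) fun t => pow_ne_zero _ (norm_ne_zero_iff.mp (by simp [hu]))
  have key : ∀ t : ℝ, (t : ℂ) ^ m * h t = F.eval (u t) / u t ^ d := fun t => by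
    conv_rhs => rw [← pow_mul_divByMonic_rootMultiplicity_eq F w]
    simp only [eval_mul, eval_pow, eval_sub, eval_X, eval_C, hsub, h]
    ring
  have h0 : h 0 = 0 := eq_zero_of_forall_nonneg_pow_mul hcont.continuousAt
    (Nat.not_even_iff_odd.mp hodd) fun t => key t ▸ hnn _ (hu t)
  simp [h, u, hw0] at h0
  exact eval_divByMonic_pow_rootMultiplicity_ne_zero w hF h0

theorem involutive_inv_conj : Function.Involutive fun r : ℂ => (conj r)⁻¹ := fun r => by
  simp

theorem exists_add_map_inv_conj_eq {M : Multiset ℂ} (h0 : (0 : ℂ) ∉ M)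
    (hrefl : M.map (fun r => (conj r)⁻¹) = M) (hconj : M.map conj = M)
    (heven : ∀ w : ℂ, ‖w‖ = 1 → Even (M.count w)) :
    ∃ N : Multiset ℂ, N + N.map (fun r => (conj r)⁻¹) = M ∧ (∀ r ∈ N, 1 ≤ ‖r‖) ∧
      N.map conj = N := by
  set N := M.filter (1 < ‖·‖) + (M.filter (‖·‖ = 1)).half
  have hN : ∀ w, N.count w =
      if 1 < ‖w‖ then M.count w else if ‖w‖ = 1 then M.count w / 2 else 0 := fun w => by
    simp only [N, Multiset.count_add, Multiset.count_half, Multiset.count_filter]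
    split_ifs <;> first | rfl | linarith
  have hMrefl : ∀ w, M.count (conj w)⁻¹ = M.count w := fun w => by
    rw [← Multiset.count_map_of_involutive involutive_inv_conj, hrefl]
  have hMconj : ∀ w, M.count (conj w) = M.count w := fun w => by
    rw [← Multiset.count_map_of_involutive Complex.conj_conj, hconj]
  refine ⟨N, Multiset.ext.mpr fun w => ?_, fun r hr => ?_, Multiset.ext.mpr fun w => ?_⟩
  · rw [Multiset.count_add, Multiset.count_map_of_involutive involutive_inv_conj, hN, hN,
      hMrefl, norm_inv, Complex.norm_conj]
    rcases lt_trichotomy ‖w‖ 1 with hw | hw | hw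
    · rcases eq_or_ne w 0 with rfl | hw0
      · simp [Multiset.count_eq_zero.mpr h0]
      · have : 1 < ‖w‖⁻¹ := one_lt_inv₀ (norm_pos_iff.mpr hw0) |>.mpr hw
        simp [hw.not_gt, hw.ne, this]
    · simp only [hw, inv_one, lt_irrefl, if_false, if_true]
      obtain ⟨k, hk⟩ := heven w hw
      omega
    · have : ‖w‖⁻¹ < 1 := inv_lt_one_of_one_lt₀ hw
      simp [hw, this.not_gt, this.ne]
  · by_contra hlt
    have := Multiset.count_pos.mpr hr
    rw [hN] at this
    split_ifs at this <;> linarith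
  · rw [Multiset.count_map_of_involutive Complex.conj_conj, hN, hN, Complex.norm_conj, hMconj]

theorem norm_sub_inv_conj {z r : ℂ} (hz : ‖z‖ = 1) (hr : r ≠ 0) :
    ‖z - (conj r)⁻¹‖ = ‖z - r‖ / ‖r‖ := by
  have hzz : z * conj z = 1 := by
    rw [Complex.mul_conj, Complex.normSq_eq_norm_sq, hz]; norm_num
  have hcr : conj r ≠ 0 := by simpa using hr
  have : z - (conj r)⁻¹ = z * conj (r - z) / conj r := by
    rw [map_sub, mul_sub, hzz]
    field_simp
  rw [this, norm_div, norm_mul, Complex.norm_conj, Complex.norm_conj, hz, one_mul, norm_sub_rev]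

theorem prod_norm_sub_add_map_inv_conj {N : Multiset ℂ} (hN : ∀ r ∈ N, r ≠ 0) {z : ℂ}
    (hz : ‖z‖ = 1) :
    ((N + N.map fun r => (conj r)⁻¹).map fun r => ‖z - r‖).prod =
      (N.map fun r => ‖z - r‖).prod ^ 2 / (N.map (‖·‖)).prod := by
  simp only [Multiset.map_add, Multiset.prod_add, Multiset.map_map, Function.comp_def]
  rw [Multiset.map_congr rfl fun r hr => norm_sub_inv_conj hz (hN r hr), Multiset.prod_map_div,
    sq, mul_div_assoc]

theorem exists_sq_norm_eq_of_nonneg_on_circle {F : ℂ[X]} {d : ℕ} (hF0 : F.coeff 0 ≠ 0)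
    (hrev : F.reverse = F) (hreal : F.map conj = F)
    (hnn : ∀ z : ℂ, ‖z‖ = 1 → 0 ≤ F.eval z / z ^ d) :
    ∃ Q : ℂ[X], Q.map conj = Q ∧ 2 * Q.natDegree = F.natDegree ∧
      (∀ z : ℂ, ‖z‖ < 1 → Q.eval z ≠ 0) ∧ ∀ z : ℂ, ‖z‖ = 1 → ‖F.eval z‖ = ‖Q.eval z‖ ^ 2 := by
  have hF : F ≠ 0 := fun h => hF0 (by simp [h])
  have hsplit : F.Splits := IsAlgClosed.splits F
  have h0 : (0 : ℂ) ∉ F.roots := fun h => hF0 (coeff_zero_eq_eval_zero F ▸ (mem_roots hF).mp h)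
  have hconj : F.roots.map conj = F.roots := by
    rw [← hsplit.roots_map_of_injective (RingHom.injective _), hreal]
  have hrefl : F.roots.map (fun r => (conj r)⁻¹) = F.roots := by
    rw [← Function.comp_def (·⁻¹) conj, ← Multiset.map_map, hconj, ← roots_reverse hsplit hF0,
      hrev]
  have heven : ∀ w : ℂ, ‖w‖ = 1 → Even (F.roots.count w) := fun w hw => by
    rw [count_roots]
    exact even_rootMultiplicity_of_nonneg_on_circle hF hnn hw
  obtain ⟨N, hNF, hN1, hNconj⟩ := exists_add_map_inv_conj_eq h0 hrefl hconj heven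
  have hN0 : ∀ r ∈ N, r ≠ 0 := fun r hr => norm_pos_iff.mp (zero_lt_one.trans_le (hN1 r hr))
  set ρ := (N.map (‖·‖)).prod
  have hρ : 0 < ρ := Multiset.prod_pos fun x hx => by
    obtain ⟨r, hr, rfl⟩ := Multiset.mem_map.mp hx
    exact norm_pos_iff.mpr (hN0 r hr)
  set c := √(‖F.leadingCoeff‖ / ρ)
  have hc : c ^ 2 = ‖F.leadingCoeff‖ / ρ := Real.sq_sqrt (by positivity)
  have hc0 : (c : ℂ) ≠ 0 := Complex.ofReal_ne_zero.mpr <|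
    Real.sqrt_ne_zero'.mpr (div_pos (norm_pos_iff.mpr (leadingCoeff_ne_zero.mpr hF)) hρ)
  refine ⟨C (c : ℂ) * (N.map fun r => X - C r).prod, ?_, ?_, ?_, ?_⟩
  · rw [Polynomial.map_mul, map_prod_X_sub_C, hNconj, map_C, Complex.conj_ofReal]
  · rw [natDegree_C_mul hc0, natDegree_multiset_prod_X_sub_C_eq_card,
      hsplit.natDegree_eq_card_roots, ← hNF, Multiset.card_add, Multiset.card_map, two_mul]
  · intro z hz
    rw [eval_mul, eval_C, eval_multiset_prod, Multiset.map_map]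
    refine mul_ne_zero hc0 (Multiset.prod_ne_zero fun h => ?_)
    obtain ⟨r, hr, hzr⟩ := Multiset.mem_map.mp h
    simp only [Function.comp_apply, eval_sub, eval_X, eval_C, sub_eq_zero] at hzr
    rw [hzr] at hz
    linarith [hN1 r hr]
  · intro z hz
    conv_lhs => rw [hsplit.eq_prod_roots]
    rw [eval_mul, eval_C, eval_mul, eval_C, norm_mul, norm_mul, norm_eval_prod_X_sub_C,
      norm_eval_prod_X_sub_C, Complex.norm_real, Real.norm_of_nonneg (Real.sqrt_nonneg _),
      mul_pow, hc, ← hNF, prod_norm_sub_add_map_inv_conj hN0 hz]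
    ring

/-- **Real complementary polynomials** (Corollary 1). If `P ∈ ℂ[z]` has all real
coefficients, `deg P = d ≥ 1`, `P(0) ≠ 0`, and `|P| ≤ 1` on the unit circle, then there
exists a canonical complementary polynomial `Q` with all real coefficients: `deg Q = d`,
`Q` has no roots in the open unit disk, and `|P(z)|² + |Q(z)|² = 1` on the unit circle. -/
theorem real_canonical_complementary_polynomial
    (d : ℕ) (hd : 1 ≤ d) (P : Polynomial ℂ)
    (hPreal : ∀ n : ℕ, (P.coeff n).im = 0)
    (hdeg : P.natDegree = d) (hP0 : P.eval 0 ≠ 0)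
    (hP : ∀ z : ℂ, ‖z‖ = 1 → ‖P.eval z‖ ≤ 1) :
    ∃ Q : Polynomial ℂ,
      (∀ n : ℕ, (Q.coeff n).im = 0) ∧
      Q.natDegree = d ∧
      (∀ z : ℂ, ‖z‖ < 1 → Q.eval z ≠ 0) ∧
      (∀ z : ℂ, ‖z‖ = 1 →
        ‖P.eval z‖ ^ 2 + ‖Q.eval z‖ ^ 2 = 1) := by
  subst hdeg
  have hPconj : P.map conj = P := map_conj_eq_self_iff.mpr hPreal
  have hcoeff0 : P.coeff 0 ≠ 0 := by rwa [coeff_zero_eq_eval_zero]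
  have hdefect : ∀ z : ℂ, ‖z‖ = 1 → 0 ≤ 1 - ‖P.eval z‖ ^ 2 := fun z hz => by
    nlinarith [hP z hz, norm_nonneg (P.eval z)]
  obtain ⟨Q, hQreal, hQdeg, hQroots, hQnorm⟩ := exists_sq_norm_eq_of_nonneg_on_circle
    (coeff_zero_circleDefect hd hcoeff0) (reverse_circleDefect hd hcoeff0)
    (map_conj_circleDefect hPconj) fun z hz => by
      rw [eval_circleDefect_of_norm_eq_one hPconj hz,
        mul_div_cancel_left₀ _ (pow_ne_zero _ (by rintro rfl; simp at hz))]
      exact_mod_cast hdefect z hz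
  rw [natDegree_circleDefect hd hcoeff0] at hQdeg
  refine ⟨Q, map_conj_eq_self_iff.mp hQreal, by omega, hQroots, fun z hz => ?_⟩
  rw [← hQnorm z hz, eval_circleDefect_of_norm_eq_one hPconj hz, norm_mul, norm_pow, hz, one_pow,
    one_mul, Complex.norm_real, Real.norm_of_nonneg (hdefect z hz)]
  ring
end

section
/- Let d ≥ 1 and let P, Q ∈ ℂ[z] with deg P = deg Q = d, with monomial coefficients pₖ, qₖ for 0 ≤ k ≤ d (and pₖ = qₖ = 0 for k < 0 or k > d). Then (1/√(2d+1)) · Φ(P,Q) ≤ Φ̃(P,Q) ≤ √(2d+1) · Φ(P,Q). -/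
/-!
On the unit circle `conj z = z⁻¹`, so `|P|² + |Q|² − 1` is the Laurent polynomial
`∑_{|n| ≤ d} cₙ zⁿ` whose coefficients `cₙ` are exactly the terms summed in `Φ̃`.
The triangle inequality and Cauchy–Schwarz give `Φ ≤ ∑ |cₙ| ≤ √(2d+1) Φ̃`. Conversely, the
`2d + 1` frequencies `-d, …, d` are distinct modulo `2d + 1`, so sampling at the `(2d+1)`-st roots
of unity inverts the expansion (discrete Fourier inversion); hence `|cₙ| ≤ Φ` for every `n`, and
`Φ̃ ≤ √(2d+1) Φ`.
-/

/-- The coefficient sequence of a polynomial extended by zero to all integer indices. -/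
noncomputable def coeffExt (P : Polynomial ℂ) (n : ℤ) : ℂ :=
  if 0 ≤ n then P.coeff n.toNat else 0

/-- The complementarity error `Φ(P,Q) = sup_{z ∈ 𝕋} ||P(z)|² + |Q(z)|² − 1|`. -/
noncomputable def PhiErr (P Q : Polynomial ℂ) : ℝ :=
  ⨆ z : {z : ℂ // ‖z‖ = 1},
    |‖P.eval z.1‖ ^ 2 + ‖Q.eval z.1‖ ^ 2 - 1|

/-- The loss function
`Φ̃(P,Q) = (Σ_{n=−d}^{d} |Σ_{m=0}^{d} (p_{n+m} conj(p_m) + q_{n+m} conj(q_m)) − δ_{n,0}|²)^{1/2}`. -/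
noncomputable def PhiLoss (d : ℕ) (P Q : Polynomial ℂ) : ℝ :=
  Real.sqrt (∑ n ∈ Finset.Icc (-(d : ℤ)) (d : ℤ),
    ‖((∑ m ∈ Finset.range (d + 1),
        (coeffExt P (n + m) * starRingEnd ℂ (coeffExt P m) +
          coeffExt Q (n + m) * starRingEnd ℂ (coeffExt Q m))) -
      if n = 0 then 1 else 0)‖ ^ 2)

open Finset ComplexConjugate

section Laurent

variable {d : ℕ} {P R : Polynomial ℂ}

theorem coeffExt_natCast (P : Polynomial ℂ) (n : ℕ) : coeffExt P n = P.coeff n := by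
  simp [coeffExt]

theorem eval_eq_sum_coeffExt_zpow (hP : P.natDegree ≤ d) {s : Finset ℤ}
    (hs : Icc 0 (d : ℤ) ⊆ s) (z : ℂ) :
    P.eval z = ∑ j ∈ s, coeffExt P j * z ^ j := by
  have hsupp : (range (d + 1)).map Nat.castEmbedding ⊆ s := fun j hj => by
    obtain ⟨n, hn, rfl⟩ := mem_map.1 hj
    exact hs (mem_Icc.2 ⟨n.cast_nonneg, by simp at hn ⊢; omega⟩)
  rw [Polynomial.eval_eq_sum_range' (Nat.lt_succ_of_le hP), ← sum_subset hsupp, sum_map]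
  · simp [coeffExt_natCast]
  · intro j _ hj
    obtain ⟨n, rfl⟩ | hneg : (∃ n : ℕ, (n : ℤ) = j) ∨ j < 0 := by
      rcases le_or_gt 0 j with h | h
      · exact .inl ⟨j.toNat, Int.toNat_of_nonneg h⟩
      · exact .inr h
    · have : d < n := by simpa using hj
      simp [coeffExt_natCast, Polynomial.coeff_eq_zero_of_natDegree_lt (hP.trans_lt this)]
    · simp [coeffExt, not_le.2 hneg]

theorem eval_mul_conj_eval (hP : P.natDegree ≤ d) (hR : R.natDegree ≤ d) {z : ℂ}
    (hz : ‖z‖ = 1) :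
    P.eval z * conj (R.eval z) = ∑ k ∈ Icc (-(d : ℤ)) d,
      (∑ m ∈ range (d + 1), coeffExt P (k + m) * conj (coeffExt R m)) * z ^ k := by
  have hz0 : z ≠ 0 := norm_ne_zero_iff.1 (by simp [hz])
  simp_rw [Polynomial.eval_eq_sum_range' (Nat.lt_succ_of_le hR) z, map_sum, mul_sum, sum_mul]
  rw [sum_comm]
  refine sum_congr rfl fun m hm => ?_
  have hmd : m ≤ d := Nat.lt_succ_iff.1 (mem_range.1 hm)
  rw [eval_eq_sum_coeffExt_zpow hP (s := Icc (-(d : ℤ) + m) (d + m)) (fun j hj => by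
    simp only [mem_Icc] at hj ⊢; omega), ← map_add_right_Icc, sum_map, sum_mul]
  refine sum_congr rfl fun k _ => ?_
  simp only [addRightEmbedding_apply, map_mul, map_pow, ← Complex.inv_eq_conj hz, coeffExt_natCast,
    zpow_add₀ hz0, zpow_natCast, inv_pow]
  field_simp

end Laurent

noncomputable def errCoeff (d : ℕ) (P Q : Polynomial ℂ) (n : ℤ) : ℂ :=
  (∑ m ∈ range (d + 1),
      (coeffExt P (n + m) * conj (coeffExt P m) + coeffExt Q (n + m) * conj (coeffExt Q m))) -
    if n = 0 then 1 else 0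

theorem PhiLoss_eq_sqrt_sum (d : ℕ) (P Q : Polynomial ℂ) :
    PhiLoss d P Q = √(∑ n ∈ Icc (-(d : ℤ)) d, ‖errCoeff d P Q n‖ ^ 2) := rfl

theorem ofReal_err_eq_sum_errCoeff {d : ℕ} {P Q : Polynomial ℂ} (hP : P.natDegree ≤ d)
    (hQ : Q.natDegree ≤ d) {z : ℂ} (hz : ‖z‖ = 1) :
    ((‖P.eval z‖ ^ 2 + ‖Q.eval z‖ ^ 2 - 1 : ℝ) : ℂ) =
      ∑ n ∈ Icc (-(d : ℤ)) d, errCoeff d P Q n * z ^ n := by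
  have hdelta : ∑ n ∈ Icc (-(d : ℤ)) d, (if n = 0 then (1 : ℂ) else 0) * z ^ n = 1 := by
    simp
  push_cast
  rw [← Complex.mul_conj', ← Complex.mul_conj', eval_mul_conj_eval hP hP hz,
    eval_mul_conj_eval hQ hQ hz, ← hdelta, ← sum_add_distrib, ← sum_sub_distrib]
  refine sum_congr rfl fun n _ => ?_
  rw [errCoeff, sum_add_distrib]
  ring

section RootsOfUnity

variable {K : Type*} [Field K] {ω : K} {N : ℕ}

theorem IsPrimitiveRoot.sum_pow_zpow_eq_zero (hω : IsPrimitiveRoot ω N) {e : ℤ}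
    (he : ¬ (N : ℤ) ∣ e) : ∑ j ∈ range N, (ω ^ e) ^ j = 0 := by
  have hne : ω ^ e ≠ 1 := mt (hω.zpow_eq_one_iff_dvd e).1 he
  have hpow : (ω ^ e) ^ N = 1 := by
    rw [← zpow_natCast, ← zpow_mul, mul_comm, zpow_mul, zpow_natCast, hω.pow_eq_one, one_zpow]
  rw [geom_sum_eq hne, hpow, sub_self, zero_div]

theorem IsPrimitiveRoot.sum_laurent_mul_zpow_neg (hω : IsPrimitiveRoot ω N) {d : ℕ}
    (hdN : 2 * d < N) (c : ℤ → K) {n : ℤ} (hn : n ∈ Icc (-(d : ℤ)) d) :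
    ∑ j ∈ range N, (∑ k ∈ Icc (-(d : ℤ)) d, c k * (ω ^ j) ^ k) * (ω ^ j) ^ (-n) = N * c n := by
  have hω0 : ω ≠ 0 := hω.ne_zero (by omega)
  have horth : ∀ k ∈ Icc (-(d : ℤ)) d,
      ∑ j ∈ range N, (ω ^ j) ^ k * (ω ^ j) ^ (-n) = if k = n then (N : K) else 0 := by
    intro k hk
    have hshift : ∀ j : ℕ, (ω ^ j) ^ k * (ω ^ j) ^ (-n) = (ω ^ (k - n)) ^ j := fun j => by
      rw [← zpow_add₀ (pow_ne_zero j hω0), ← zpow_natCast ω j, ← zpow_mul,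
        ← zpow_natCast (ω ^ (k - n)), ← zpow_mul, sub_eq_add_neg, mul_comm]
    simp_rw [hshift]
    split_ifs with hkn
    · simp [hkn]
    · refine hω.sum_pow_zpow_eq_zero fun hdvd => hkn ?_
      simp only [mem_Icc] at hk hn
      exact sub_eq_zero.1 (Int.eq_zero_of_abs_lt_dvd hdvd (abs_lt.2 ⟨by omega, by omega⟩))
  simp_rw [sum_mul, mul_assoc]
  rw [sum_comm]
  simp_rw [← mul_sum]
  rw [sum_congr rfl fun k hk => by rw [horth k hk]]
  simp [hn, mul_comm]

end RootsOfUnity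

theorem norm_sum_mul_zpow_le {s : Finset ℤ} (c : ℤ → ℂ) {z : ℂ} (hz : ‖z‖ = 1) :
    ‖∑ k ∈ s, c k * z ^ k‖ ≤ ∑ k ∈ s, ‖c k‖ :=
  (norm_sum_le _ _).trans_eq <| sum_congr rfl fun k _ => by
    rw [norm_mul, norm_zpow, hz, one_zpow, mul_one]

theorem norm_coeff_le_of_norm_sum_mul_zpow_le (c : ℤ → ℂ) {d : ℕ} {M : ℝ}
    (hM : ∀ z : ℂ, ‖z‖ = 1 → ‖∑ k ∈ Icc (-(d : ℤ)) d, c k * z ^ k‖ ≤ M) {n : ℤ}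
    (hn : n ∈ Icc (-(d : ℤ)) d) : ‖c n‖ ≤ M := by
  set N := 2 * d + 1
  have hω := Complex.isPrimitiveRoot_exp N (by omega)
  have hunit : ∀ j : ℕ, ‖Complex.exp (2 * Real.pi * Complex.I / N) ^ j‖ = 1 := fun j => by
    rw [norm_pow, hω.norm'_eq_one (by omega), one_pow]
  refine le_of_mul_le_mul_left ?_ (by positivity : (0 : ℝ) < N)
  calc (N : ℝ) * ‖c n‖ = ‖(N : ℂ) * c n‖ := by simp
    _ = _ := by rw [← hω.sum_laurent_mul_zpow_neg (by omega) c hn]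
    _ ≤ _ := norm_sum_le _ _
    _ ≤ ∑ _j ∈ range N, M := sum_le_sum fun j _ => by
      rw [norm_mul, norm_zpow, hunit, one_zpow, mul_one]
      exact hM _ (hunit j)
    _ = N * M := by simp

section PhiErr

variable {d : ℕ} {P Q : Polynomial ℂ}

theorem abs_err_le_sum_norm_errCoeff (hP : P.natDegree ≤ d) (hQ : Q.natDegree ≤ d) {z : ℂ}
    (hz : ‖z‖ = 1) :
    |‖P.eval z‖ ^ 2 + ‖Q.eval z‖ ^ 2 - 1| ≤ ∑ n ∈ Icc (-(d : ℤ)) d, ‖errCoeff d P Q n‖ := by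
  rw [← Real.norm_eq_abs, ← Complex.norm_real, ofReal_err_eq_sum_errCoeff hP hQ hz]
  exact norm_sum_mul_zpow_le _ hz

theorem PhiErr_le_sum_norm_errCoeff (hP : P.natDegree ≤ d) (hQ : Q.natDegree ≤ d) :
    PhiErr P Q ≤ ∑ n ∈ Icc (-(d : ℤ)) d, ‖errCoeff d P Q n‖ :=
  haveI : Nonempty {z : ℂ // ‖z‖ = 1} := ⟨⟨1, norm_one⟩⟩
  ciSup_le fun z => abs_err_le_sum_norm_errCoeff hP hQ z.2

theorem abs_err_le_PhiErr (hP : P.natDegree ≤ d) (hQ : Q.natDegree ≤ d) {z : ℂ}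
    (hz : ‖z‖ = 1) : |‖P.eval z‖ ^ 2 + ‖Q.eval z‖ ^ 2 - 1| ≤ PhiErr P Q :=
  le_ciSup (f := fun z : {z : ℂ // ‖z‖ = 1} => |‖P.eval z.1‖ ^ 2 + ‖Q.eval z.1‖ ^ 2 - 1|)
    ⟨_, Set.forall_mem_range.2 fun z => abs_err_le_sum_norm_errCoeff hP hQ z.2⟩ ⟨z, hz⟩

theorem norm_errCoeff_le_PhiErr (hP : P.natDegree ≤ d) (hQ : Q.natDegree ≤ d) {n : ℤ}
    (hn : n ∈ Icc (-(d : ℤ)) d) : ‖errCoeff d P Q n‖ ≤ PhiErr P Q := by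
  refine norm_coeff_le_of_norm_sum_mul_zpow_le _ (fun z hz => ?_) hn
  rw [← ofReal_err_eq_sum_errCoeff hP hQ hz, Complex.norm_real, Real.norm_eq_abs]
  exact abs_err_le_PhiErr hP hQ hz

end PhiErr

theorem phi_loss_equivalence_general
    (d : ℕ) (P Q : Polynomial ℂ)
    (hPdeg : P.natDegree = d) (hQdeg : Q.natDegree = d) :
    (1 / Real.sqrt (2 * d + 1)) * PhiErr P Q ≤ PhiLoss d P Q ∧
      PhiLoss d P Q ≤ Real.sqrt (2 * d + 1) * PhiErr P Q := by
  set s := Icc (-(d : ℤ)) d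
  set c := errCoeff d P Q
  have hcard : ((#s : ℕ) : ℝ) = 2 * d + 1 := by
    rw [Int.card_Icc, show ((d : ℤ) + 1 - -(d : ℤ)).toNat = 2 * d + 1 by omega]
    push_cast; ring
  have hsqrt : 0 < √(#s : ℝ) := by rw [hcard]; positivity
  rw [PhiLoss_eq_sqrt_sum, ← hcard]
  constructor
  · calc 1 / √(#s : ℝ) * PhiErr P Q ≤ 1 / √(#s : ℝ) * ∑ n ∈ s, ‖c n‖ := by
          gcongr; exact PhiErr_le_sum_norm_errCoeff hPdeg.le hQdeg.le
      _ ≤ 1 / √(#s : ℝ) * (√(#s : ℝ) * √(∑ n ∈ s, ‖c n‖ ^ 2)) := by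
          gcongr
          simpa using Real.sum_mul_le_sqrt_mul_sqrt s (fun _ => 1) (fun n => ‖c n‖)
      _ = √(∑ n ∈ s, ‖c n‖ ^ 2) := by field_simp
  · have hΦ : 0 ≤ PhiErr P Q := Real.iSup_nonneg fun _ => abs_nonneg _
    calc √(∑ n ∈ s, ‖c n‖ ^ 2) ≤ √(∑ _n ∈ s, PhiErr P Q ^ 2) := by
          gcongr with n hn
          exact norm_errCoeff_le_PhiErr hPdeg.le hQdeg.le hn
      _ = √(#s : ℝ) * PhiErr P Q := by
          rw [sum_const, nsmul_eq_mul, Real.sqrt_mul (Nat.cast_nonneg _), Real.sqrt_sq hΦ]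

/-- **Equivalence of the complementarity error and the loss function** (Proposition 1):
`(1/√(2d+1)) Φ(P,Q) ≤ Φ̃(P,Q) ≤ √(2d+1) Φ(P,Q)` for polynomials `P, Q` of degree `d ≥ 1`. -/
theorem phi_loss_equivalence
    (d : ℕ) (hd : 1 ≤ d) (P Q : Polynomial ℂ)
    (hPdeg : P.natDegree = d) (hQdeg : Q.natDegree = d) :
    (1 / Real.sqrt (2 * d + 1)) * PhiErr P Q ≤ PhiLoss d P Q ∧
      PhiLoss d P Q ≤ Real.sqrt (2 * d + 1) * PhiErr P Q :=
  phi_loss_equivalence_general d P Q hPdeg hQdeg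
end

section
/- Let d ≥ 1, δ ∈ (0,1), and let P ∈ ℂ[z] with deg P = d and |P(z)| ≤ 1 − δ for all z ∈ 𝕋. Then for every z ∈ ℂ with (1−δ)^{1/d} ≤ |z| ≤ (1−δ)^{−1/d}, one has |P(z) · P*(1/z)| ≤ 1 − δ. -/
/-!
With `P*` the conjugate polynomial, `Q(z) := z^d P*(1/z)` is again a polynomial, and on the unit
circle `1/z = conj z`, so `|P Q| = |P|^2 ≤ (1-δ)^2` there. By the maximum modulus principle the
bound persists on the closed unit disk, i.e. `|P(z) P*(1/z)| ≤ (1-δ)^2 / |z|^d ≤ 1 - δ` as soon as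
`1 - δ ≤ |z|^d ≤ 1`. The modulus of `P(z) P*(1/z)` is invariant under the inversion
`z ↦ 1 / conj z`, which takes the outer half of the annulus to the inner half.
-/

open Polynomial ComplexConjugate

lemma Complex.norm_le_of_forall_norm_eq_one_norm_le {E : Type*} [NormedAddCommGroup E]
    [NormedSpace ℂ E] {f : ℂ → E} (hf : Differentiable ℂ f) {C : ℝ}
    (hC : ∀ z : ℂ, ‖z‖ = 1 → ‖f z‖ ≤ C) {z : ℂ} (hz : ‖z‖ ≤ 1) : ‖f z‖ ≤ C := by
  refine Complex.norm_le_of_forall_mem_frontier_norm_le (Metric.isBounded_ball (x := 0) (r := 1))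
    hf.diffContOnCl (fun w hw => hC w ?_) ?_
  · rwa [frontier_ball 0 one_ne_zero, mem_sphere_zero_iff_norm] at hw
  · rwa [closure_ball 0 one_ne_zero, mem_closedBall_zero_iff]

namespace Polynomial

lemma eval_reflect_of_ne_zero {K : Type*} [Field K] {p : K[X]} {N : ℕ} (hp : p.natDegree ≤ N)
    {x : K} (hx : x ≠ 0) : (reflect N p).eval x = x ^ N * p.eval x⁻¹ := by
  have : Invertible x⁻¹ := invertibleOfNonzero (inv_ne_zero hx)
  have h := eval₂_reflect_mul_pow (RingHom.id K) x⁻¹ N p hp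
  rw [invOf_eq_inv, inv_inv] at h
  rw [← eval₂_id, ← eval₂_id, ← h, mul_left_comm, inv_pow, mul_inv_cancel₀ (pow_ne_zero N hx),
    mul_one]

lemma eval_map_conj (p : ℂ[X]) (z : ℂ) :
    (p.map (starRingEnd ℂ)).eval (conj z) = conj (p.eval z) := by
  rw [eval_map, eval₂_at_apply]

noncomputable def conjProd (p : ℂ[X]) (z : ℂ) : ℂ := p.eval z * (p.map (starRingEnd ℂ)).eval z⁻¹

lemma norm_conjProd_inv_conj (p : ℂ[X]) (z : ℂ) : ‖p.conjProd (conj z)⁻¹‖ = ‖p.conjProd z‖ := by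
  have h₁ : (conj z)⁻¹⁻¹ = conj z := inv_inv _
  have h₂ : z⁻¹ = conj (conj z)⁻¹ := by rw [map_inv₀, Complex.conj_conj]
  rw [conjProd, conjProd, h₁, eval_map_conj, h₂, eval_map_conj, norm_mul, norm_mul,
    Complex.norm_conj, Complex.norm_conj, mul_comm]

lemma norm_conjProd_mul_pow_le_sq {p : ℂ[X]} {d : ℕ} (hp : p.natDegree ≤ d) {C : ℝ}
    (hC : ∀ z : ℂ, ‖z‖ = 1 → ‖p.eval z‖ ≤ C) {z : ℂ} (hz₀ : z ≠ 0) (hz : ‖z‖ ≤ 1) :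
    ‖p.conjProd z‖ * ‖z‖ ^ d ≤ C ^ 2 := by
  set q := reflect d (p.map (starRingEnd ℂ))
  have hq : ∀ w : ℂ, w ≠ 0 → q.eval w = w ^ d * (p.map (starRingEnd ℂ)).eval w⁻¹ :=
    fun w hw => eval_reflect_of_ne_zero (natDegree_map_le.trans hp) hw
  have hcircle : ∀ w : ℂ, ‖w‖ = 1 → ‖(p * q).eval w‖ ≤ C ^ 2 := by
    intro w hw
    have hw₀ : w ≠ 0 := norm_ne_zero_iff.1 (by rw [hw]; exact one_ne_zero)
    rw [eval_mul, hq w hw₀, Complex.inv_eq_conj hw, eval_map_conj, norm_mul, norm_mul, norm_pow,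
      hw, one_pow, one_mul, Complex.norm_conj, ← sq]
    exact pow_le_pow_left₀ (norm_nonneg _) (hC w hw) 2
  have hdisk := Complex.norm_le_of_forall_norm_eq_one_norm_le (p * q).differentiable hcircle hz
  rwa [eval_mul, hq z hz₀, norm_mul, norm_mul, norm_pow, mul_left_comm, ← norm_mul, mul_comm]
    at hdisk

lemma norm_conjProd_le_of_norm_le_one {p : ℂ[X]} {d : ℕ} (hp : p.natDegree ≤ d) {C : ℝ}
    (hC₀ : 0 < C) (hC : ∀ z : ℂ, ‖z‖ = 1 → ‖p.eval z‖ ≤ C) {z : ℂ} (hz₀ : z ≠ 0)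
    (hlow : C ≤ ‖z‖ ^ d) (hz : ‖z‖ ≤ 1) : ‖p.conjProd z‖ ≤ C := by
  refine le_of_mul_le_mul_right ?_ hC₀
  calc ‖p.conjProd z‖ * C ≤ ‖p.conjProd z‖ * ‖z‖ ^ d := by gcongr
    _ ≤ C ^ 2 := norm_conjProd_mul_pow_le_sq hp hC hz₀ hz
    _ = C * C := sq C

lemma norm_conjProd_le {p : ℂ[X]} {d : ℕ} (hp : p.natDegree ≤ d) {C : ℝ} (hC₀ : 0 < C)
    (hC : ∀ z : ℂ, ‖z‖ = 1 → ‖p.eval z‖ ≤ C) {z : ℂ} (hz₀ : z ≠ 0) (hlow : C ≤ ‖z‖ ^ d)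
    (hup : ‖z‖ ^ d ≤ C⁻¹) : ‖p.conjProd z‖ ≤ C := by
  rcases le_or_gt ‖z‖ 1 with hz | hz
  · exact norm_conjProd_le_of_norm_le_one hp hC₀ hC hz₀ hlow hz
  · have hw : ‖(conj z)⁻¹‖ = ‖z‖⁻¹ := by rw [norm_inv, Complex.norm_conj]
    rw [← norm_conjProd_inv_conj]
    refine norm_conjProd_le_of_norm_le_one hp hC₀ hC (by simpa using hz₀) ?_ ?_
    · rw [hw, inv_pow]
      exact (le_inv_comm₀ (pow_pos (norm_pos_iff.2 hz₀) d) hC₀).1 hup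
    · rw [hw]
      exact inv_le_one_of_one_le₀ hz.le

end Polynomial

/-- **Bound on `|P(z)P*(1/z)|` in the annulus `A(r_δ)`** (Lemma 2). If `deg P = d ≥ 1`,
`δ ∈ (0,1)`, and `|P| ≤ 1 − δ` on the unit circle, then
`|P(z)P*(1/z)| ≤ 1 − δ` for all `z` with `(1−δ)^{1/d} ≤ |z| ≤ (1−δ)^{−1/d}`. -/
theorem annulus_product_bound
    (d : ℕ) (hd : 1 ≤ d) (δ : ℝ) (hδ : δ ∈ Set.Ioo (0 : ℝ) 1)
    (P : Polynomial ℂ) (hdeg : P.natDegree = d)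
    (hP : ∀ z : ℂ, ‖z‖ = 1 → ‖P.eval z‖ ≤ 1 - δ) :
    ∀ z : ℂ, (1 - δ) ^ (1 / (d : ℝ)) ≤ ‖z‖ →
      ‖z‖ ≤ (1 - δ) ^ (-(1 / (d : ℝ))) →
      ‖P.eval z * (P.map (starRingEnd ℂ)).eval z⁻¹‖ ≤ 1 - δ := by
  intro z hlow hup
  have hC₀ : 0 < 1 - δ := sub_pos.2 hδ.2
  have hroot : ((1 - δ) ^ (1 / (d : ℝ))) ^ d = 1 - δ := by
    rw [one_div, Real.rpow_inv_natCast_pow hC₀.le (by omega)]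
  have hz₀ : z ≠ 0 := norm_pos_iff.1 ((Real.rpow_pos_of_pos hC₀ _).trans_le hlow)
  refine norm_conjProd_le hdeg.le hC₀ hP hz₀ ?_ ?_
  · rw [← hroot]
    exact pow_le_pow_left₀ (Real.rpow_nonneg hC₀.le _) hlow d
  · rw [Real.rpow_neg hC₀.le] at hup
    rw [← hroot, ← inv_pow]
    exact pow_le_pow_left₀ (norm_nonneg _) hup d
end

section
/- Let d ≥ 1, δ ∈ (0,1), and let P ∈ ℂ[z] with deg P = d and |P(z)| ≤ 1 − δ for all z ∈ 𝕋. Then for every z ∈ ℂ with (1−δ)^{1/d} ≤ |z| ≤ (1−δ)^{−1/d}, the principal complex logarithm satisfies |Log(1 − P(z)·P*(1/z))| ≤ log(1/δ). (Note that |P(z)P*(1/z)| ≤ 1 − δ < 1 on this set, so 1 − P(z)P*(1/z) lies in the open right half-plane and the principal logarithm is well defined.) -/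
/-!
By the maximum principle `|P| ≤ 1 - δ` on the closed unit disk, and applied to the reflected
polynomial `z ^ d P(1/z)` it gives `|P(z)| ≤ (1 - δ) |z| ^ d` for `|z| ≥ 1`; the same holds for `P*`.
Hence `|P(z) P*(1/z)| ≤ (1 - δ)² max(|z| ^ d, |z| ^ (-d)) ≤ 1 - δ` on the annulus, and comparing the
Taylor series of `-Log (1 - w)` termwise with that of `-log (1 - |w|)` gives
`|Log (1 - w)| ≤ -log (1 - |w|) ≤ log (1/δ)`.
-/

open Polynomial Complex ComplexConjugate

theorem Real.hasSum_pow_div_neg_log {x : ℝ} (hx : |x| < 1) :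
    HasSum (fun n : ℕ ↦ x ^ n / n) (-Real.log (1 - x)) := by
  refine (hasSum_nat_add_iff' 1).mp ?_
  simpa using Real.hasSum_pow_div_log_of_abs_lt_one hx

theorem Complex.norm_log_one_sub_le {w : ℂ} (hw : ‖w‖ < 1) :
    ‖log (1 - w)‖ ≤ -Real.log (1 - ‖w‖) := by
  rw [← norm_neg]
  refine (hasSum_taylorSeries_neg_log hw).norm_le_of_bounded
    (Real.hasSum_pow_div_neg_log (by rwa [abs_norm])) fun n ↦ ?_
  rw [norm_div, norm_pow, norm_natCast]

namespace Polynomial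

theorem eval_reflect_inv_mul_pow {K : Type*} [Field K] {Q : K[X]} {N : ℕ} (hN : Q.natDegree ≤ N)
    {x : K} (hx : x ≠ 0) : (reflect N Q).eval x⁻¹ * x ^ N = Q.eval x := by
  let _ : Invertible x := invertibleOfNonzero hx
  simpa only [eval, invOf_eq_inv] using eval₂_reflect_mul_pow (RingHom.id K) x N Q hN

theorem norm_eval_map_conj (Q : ℂ[X]) (z : ℂ) :
    ‖(Q.map (starRingEnd ℂ)).eval z‖ = ‖Q.eval (conj z)‖ := by
  rw [← conj_conj z, eval_map_apply, norm_conj, conj_conj]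

variable {Q : ℂ[X]} {C : ℝ}

theorem norm_eval_le_of_norm_le_one (h : ∀ u : ℂ, ‖u‖ = 1 → ‖Q.eval u‖ ≤ C) {z : ℂ}
    (hz : ‖z‖ ≤ 1) : ‖Q.eval z‖ ≤ C := by
  refine Complex.norm_le_of_forall_mem_frontier_norm_le (Metric.isBounded_ball (x := 0) (r := 1))
    Q.differentiable.diffContOnCl (fun u hu ↦ h u ?_) ?_
  · simpa [frontier_ball (0 : ℂ) one_ne_zero] using hu
  · simpa [closure_ball (0 : ℂ) one_ne_zero] using hz

theorem norm_eval_le_mul_pow_of_one_le {n : ℕ} (hn : Q.natDegree ≤ n)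
    (h : ∀ u : ℂ, ‖u‖ = 1 → ‖Q.eval u‖ ≤ C) {z : ℂ} (hz : 1 ≤ ‖z‖) :
    ‖Q.eval z‖ ≤ C * ‖z‖ ^ n := by
  have hz0 : z ≠ 0 := norm_pos_iff.mp (one_pos.trans_le hz)
  have hreflect : ∀ u : ℂ, ‖u‖ = 1 → ‖(reflect n Q).eval u‖ ≤ C := fun u hu ↦ by
    have hu0 : u ≠ 0 := norm_ne_zero_iff.mp (by rw [hu]; exact one_ne_zero)
    have := eval_reflect_inv_mul_pow hn (inv_ne_zero hu0)
    rw [inv_inv] at this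
    simpa [← this, hu] using h u⁻¹ (by rw [norm_inv, hu, inv_one])
  rw [← eval_reflect_inv_mul_pow hn hz0, norm_mul, norm_pow]
  gcongr
  exact norm_eval_le_of_norm_le_one hreflect (by rw [norm_inv]; exact inv_le_one_of_one_le₀ hz)

theorem norm_eval_mul_eval_map_conj_inv_le {n : ℕ} (hn : Q.natDegree ≤ n)
    (h : ∀ u : ℂ, ‖u‖ = 1 → ‖Q.eval u‖ ≤ C) {z : ℂ} (hz : z ≠ 0) :
    ‖Q.eval z * (Q.map (starRingEnd ℂ)).eval z⁻¹‖ ≤ C ^ 2 * max (‖z‖ ^ n) (‖z‖ ^ n)⁻¹ := by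
  have hC : 0 ≤ C := (norm_nonneg _).trans (h 1 norm_one)
  have hconj : ∀ u : ℂ, ‖u‖ = 1 → ‖(Q.map (starRingEnd ℂ)).eval u‖ ≤ C := fun u hu ↦ by
    rw [norm_eval_map_conj]
    exact h _ (by rwa [norm_conj])
  have hn' : (Q.map (starRingEnd ℂ)).natDegree ≤ n := by rwa [natDegree_map]
  rw [norm_mul]
  rcases le_total ‖z‖ 1 with hle | hge
  · have hinv : 1 ≤ ‖z⁻¹‖ := by rw [norm_inv]; exact one_le_inv₀ (norm_pos_iff.mpr hz) |>.mpr hle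
    calc ‖Q.eval z‖ * ‖(Q.map (starRingEnd ℂ)).eval z⁻¹‖
        ≤ C * (C * ‖z⁻¹‖ ^ n) := by
          gcongr
          exacts [norm_eval_le_of_norm_le_one h hle, norm_eval_le_mul_pow_of_one_le hn' hconj hinv]
      _ ≤ C ^ 2 * max (‖z‖ ^ n) (‖z‖ ^ n)⁻¹ := by
          rw [norm_inv, inv_pow, ← mul_assoc, ← sq]
          gcongr
          exact le_max_right _ _
  · have hinv : ‖z⁻¹‖ ≤ 1 := by rw [norm_inv]; exact inv_le_one_of_one_le₀ hge
    calc ‖Q.eval z‖ * ‖(Q.map (starRingEnd ℂ)).eval z⁻¹‖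
        ≤ C * ‖z‖ ^ n * C := by
          gcongr
          exacts [norm_eval_le_mul_pow_of_one_le hn h hge, norm_eval_le_of_norm_le_one hconj hinv]
      _ ≤ C ^ 2 * max (‖z‖ ^ n) (‖z‖ ^ n)⁻¹ := by
          rw [mul_right_comm, ← sq]
          gcongr
          exact le_max_left _ _

end Polynomial

section Annulus

variable {a r : ℝ} (n : ℕ)

theorem le_pow_of_rpow_one_div_le (ha₀ : 0 < a) (ha₁ : a ≤ 1) (hr : a ^ (1 / (n : ℝ)) ≤ r) :
    a ≤ r ^ n := by
  calc a = a ^ (1 : ℝ) := (Real.rpow_one a).symm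
    _ ≤ a ^ (1 / (n : ℝ) * n) := Real.rpow_le_rpow_of_exponent_ge ha₀ ha₁ (by
        rcases eq_or_ne (n : ℝ) 0 with h | h <;> simp [h])
    _ = (a ^ (1 / (n : ℝ))) ^ n := by rw [Real.rpow_mul_natCast ha₀.le]
    _ ≤ r ^ n := by gcongr

theorem pow_le_inv_of_le_rpow_neg_one_div (ha₀ : 0 < a) (ha₁ : a ≤ 1) (hr₀ : 0 ≤ r)
    (hr : r ≤ a ^ (-(1 / (n : ℝ)))) : r ^ n ≤ a⁻¹ := by
  calc r ^ n ≤ (a ^ (-(1 / (n : ℝ)))) ^ n := by gcongr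
    _ = a ^ (-(1 / (n : ℝ) * n)) := by rw [← Real.rpow_mul_natCast ha₀.le, neg_mul]
    _ ≤ a ^ (-1 : ℝ) := Real.rpow_le_rpow_of_exponent_ge ha₀ ha₁ (by
        rcases eq_or_ne (n : ℝ) 0 with h | h <;> simp [h])
    _ = a⁻¹ := Real.rpow_neg_one a

end Annulus

theorem annulus_log_bound_general
    (d : ℕ) (δ : ℝ) (hδ : δ ∈ Set.Ioo (0 : ℝ) 1)
    (P : Polynomial ℂ) (hdeg : P.natDegree = d)
    (hP : ∀ z : ℂ, ‖z‖ = 1 → ‖P.eval z‖ ≤ 1 - δ) :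
    ∀ z : ℂ, (1 - δ) ^ (1 / (d : ℝ)) ≤ ‖z‖ →
      ‖z‖ ≤ (1 - δ) ^ (-(1 / (d : ℝ))) →
      ‖Complex.log (1 - P.eval z * (P.map (starRingEnd ℂ)).eval z⁻¹)‖ ≤
        Real.log (1 / δ) := by
  intro z hlo hhi
  obtain ⟨hδ₀, hδ₁⟩ := hδ
  have ha₀ : 0 < 1 - δ := by linarith
  have hpow_lo := le_pow_of_rpow_one_div_le d ha₀ (by linarith) hlo
  have hpow_hi := pow_le_inv_of_le_rpow_neg_one_div d ha₀ (by linarith) (norm_nonneg z) hhi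
  have hz : z ≠ 0 := norm_pos_iff.mp ((Real.rpow_pos_of_pos ha₀ _).trans_le hlo)
  have hw : ‖P.eval z * (P.map (starRingEnd ℂ)).eval z⁻¹‖ ≤ 1 - δ :=
    calc _ ≤ (1 - δ) ^ 2 * max (‖z‖ ^ d) (‖z‖ ^ d)⁻¹ :=
          norm_eval_mul_eval_map_conj_inv_le hdeg.le hP hz
      _ ≤ (1 - δ) ^ 2 * (1 - δ)⁻¹ := by
          gcongr
          exact max_le hpow_hi (inv_anti₀ ha₀ hpow_lo)
      _ = 1 - δ := by field_simp
  calc _ ≤ -Real.log (1 - ‖P.eval z * (P.map (starRingEnd ℂ)).eval z⁻¹‖) :=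
        norm_log_one_sub_le (by linarith)
    _ ≤ Real.log (1 / δ) := by
        rw [one_div, Real.log_inv, neg_le_neg_iff]
        exact Real.log_le_log hδ₀ (by linarith)

/-- **Bound on the logarithm in the annulus `A(r_δ)`** (Lemma 3). If `deg P = d ≥ 1`,
`δ ∈ (0,1)`, and `|P| ≤ 1 − δ` on the unit circle, then for all `z` with
`(1−δ)^{1/d} ≤ |z| ≤ (1−δ)^{−1/d}` the principal logarithm satisfies
`|Log(1 − P(z)P*(1/z))| ≤ log(1/δ)`. -/
theorem annulus_log_bound
    (d : ℕ) (hd : 1 ≤ d) (δ : ℝ) (hδ : δ ∈ Set.Ioo (0 : ℝ) 1)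
    (P : Polynomial ℂ) (hdeg : P.natDegree = d)
    (hP : ∀ z : ℂ, ‖z‖ = 1 → ‖P.eval z‖ ≤ 1 - δ) :
    ∀ z : ℂ, (1 - δ) ^ (1 / (d : ℝ)) ≤ ‖z‖ →
      ‖z‖ ≤ (1 - δ) ^ (-(1 / (d : ℝ))) →
      ‖Complex.log (1 - P.eval z * (P.map (starRingEnd ℂ)).eval z⁻¹)‖ ≤
        Real.log (1 / δ) :=
  annulus_log_bound_general d δ hδ P hdeg hP
end

section
/- Fix an integer d ≥ 1 and real numbers λ, θ₀, …, θ_d, φ₀, …, φ_d. Define, for z ∈ ℂ, the ordered matrix product U(z) := A₀(λ,φ₀,θ₀) · (D(z)A(φ₁,θ₁)) · (D(z)A(φ₂,θ₂)) ⋯ (D(z)A(φ_d,θ_d)) and u(z) := (−1)^d · z^d · e^{i(λ + φ₀ + φ₁ + ⋯ + φ_d)}. Then for every z ∈ 𝕋: the (2,1) entry of U(z) equals u(z) · conj( (1,2) entry of U(z) ), and the (2,2) entry of U(z) equals −u(z) · conj( (1,1) entry of U(z) ). -/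
/-!
Say a `2 × 2` matrix has phase `u` if it is of the form `!![a, b; u * conj b, -(u * conj a)]`.
`A₀(λ,φ,θ)` has phase `e^{i(λ+φ)}`, and for `|z| = 1` each factor `D(z) A(φ,θ)` has the unimodular
phase `z e^{iφ}`. Multiplying a matrix of phase `u` on the right by one of unimodular phase `v`
gives phase `-(u v)`, so by induction on `d` the product `U(z)` has phase
`(-1)^d z^d e^{i(λ + φ₀ + ⋯ + φ_d)} = u(z)`.
-/

open Complex

/-- The matrix `A₀(λ,φ,θ)` of the GQSP sequence. -/
noncomputable def gqspA0 (lam phi th : ℝ) : Matrix (Fin 2) (Fin 2) ℂ :=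
  !![Complex.exp (Complex.I * ((lam : ℂ) + (phi : ℂ))) * (Real.cos th : ℂ),
      Complex.exp (Complex.I * (lam : ℂ)) * (Real.sin th : ℂ);
     Complex.exp (Complex.I * (phi : ℂ)) * (Real.sin th : ℂ),
      -(Real.cos th : ℂ)]

/-- The matrix `A(φ,θ)` of the GQSP sequence. -/
noncomputable def gqspA (phi th : ℝ) : Matrix (Fin 2) (Fin 2) ℂ :=
  !![Complex.exp (Complex.I * (phi : ℂ)) * (Real.cos th : ℂ), (Real.sin th : ℂ);
     Complex.exp (Complex.I * (phi : ℂ)) * (Real.sin th : ℂ), -(Real.cos th : ℂ)]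

/-- The matrix `D(z)`. -/
noncomputable def gqspD (z : ℂ) : Matrix (Fin 2) (Fin 2) ℂ :=
  !![z, 0; 0, 1]

/-- The ordered GQSP product `U(z) = A₀(λ,φ₀,θ₀) ⬝ ∏_{j=1}^d (D(z) A(φⱼ,θⱼ))`. -/
noncomputable def gqspU (d : ℕ) (lam : ℝ) (phi th : ℕ → ℝ) (z : ℂ) :
    Matrix (Fin 2) (Fin 2) ℂ :=
  gqspA0 lam (phi 0) (th 0) *
    ((List.range d).map (fun j => gqspD z * gqspA (phi (j + 1)) (th (j + 1)))).prod

def HasSecondRowPhase {R : Type*} [Star R] [Mul R] [Neg R] (M : Matrix (Fin 2) (Fin 2) R)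
    (u : R) : Prop :=
  M 1 0 = u * star (M 0 1) ∧ M 1 1 = -(u * star (M 0 0))

theorem HasSecondRowPhase.mul {R : Type*} [CommRing R] [StarRing R]
    {M N : Matrix (Fin 2) (Fin 2) R} {u v : R} (hM : HasSecondRowPhase M u)
    (hN : HasSecondRowPhase N v) (hv : star v * v = 1) :
    HasSecondRowPhase (M * N) (-(u * v)) := by
  obtain ⟨hM₁₀, hM₁₁⟩ := hM
  obtain ⟨hN₁₀, hN₁₁⟩ := hN
  simp only [HasSecondRowPhase, Matrix.mul_apply, Fin.sum_univ_two, star_add, star_mul, star_neg,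
    star_star, hM₁₀, hM₁₁, hN₁₀, hN₁₁]
  constructor
  · linear_combination -(u * star (M 0 1) * N 0 0 * hv)
  · linear_combination -(u * star (M 0 1) * N 0 1 * hv)

theorem Complex.star_mul_self_eq_one {v : ℂ} (hv : ‖v‖ = 1) : star v * v = 1 := by
  simp [Complex.conj_mul', hv]

theorem Complex.star_exp_I_mul_ofReal_mul_self (x : ℝ) :
    star (Complex.exp (Complex.I * (x : ℂ))) * Complex.exp (Complex.I * (x : ℂ)) = 1 :=
  Complex.star_mul_self_eq_one (Complex.norm_exp_I_mul_ofReal x)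

theorem gqspA0_hasSecondRowPhase (lam phi th : ℝ) :
    HasSecondRowPhase (gqspA0 lam phi th) (Complex.exp (Complex.I * ((lam : ℂ) + (phi : ℂ)))) := by
  have hsplit : Complex.exp (Complex.I * ((lam : ℂ) + (phi : ℂ))) =
      Complex.exp (Complex.I * (lam : ℂ)) * Complex.exp (Complex.I * (phi : ℂ)) := by
    rw [mul_add, Complex.exp_add]
  have hlam := Complex.star_exp_I_mul_ofReal_mul_self lam
  have hphi := Complex.star_exp_I_mul_ofReal_mul_self phi
  simp only [HasSecondRowPhase, gqspA0, hsplit, Matrix.of_apply, Matrix.cons_val',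
    Matrix.cons_val_zero, Matrix.cons_val_one, Matrix.empty_val', Matrix.cons_val_fin_one,
    Complex.star_def, map_mul, Complex.conj_ofReal] at hlam hphi ⊢
  constructor
  · linear_combination -(Complex.exp (Complex.I * (phi : ℂ)) * (Real.sin th : ℂ) * hlam)
  · linear_combination (Real.cos th : ℂ) * (Complex.exp (Complex.I * (phi : ℂ)) *
      starRingEnd ℂ (Complex.exp (Complex.I * (phi : ℂ))) * hlam + hphi)

theorem gqspD_mul_gqspA_hasSecondRowPhase {z : ℂ} (hz : ‖z‖ = 1) (phi th : ℝ) :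
    HasSecondRowPhase (gqspD z * gqspA phi th) (z * Complex.exp (Complex.I * (phi : ℂ))) := by
  have hzz := Complex.star_mul_self_eq_one hz
  have hphi := Complex.star_exp_I_mul_ofReal_mul_self phi
  simp only [HasSecondRowPhase, gqspD, gqspA, Matrix.mul_fin_two, Matrix.of_apply,
    Matrix.cons_val', Matrix.cons_val_zero, Matrix.cons_val_one, Matrix.empty_val',
    Matrix.cons_val_fin_one, zero_mul, add_zero, Complex.star_def, map_mul,
    Complex.conj_ofReal] at hzz hphi ⊢
  constructor
  · linear_combination -(Complex.exp (Complex.I * (phi : ℂ)) * (Real.sin th : ℂ) * hzz)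
  · linear_combination (Real.cos th : ℂ) * (Complex.exp (Complex.I * (phi : ℂ)) *
      starRingEnd ℂ (Complex.exp (Complex.I * (phi : ℂ))) * hzz + hphi)

theorem gqspU_zero (lam : ℝ) (phi th : ℕ → ℝ) (z : ℂ) :
    gqspU 0 lam phi th z = gqspA0 lam (phi 0) (th 0) := by
  simp [gqspU]

theorem gqspU_succ (d : ℕ) (lam : ℝ) (phi th : ℕ → ℝ) (z : ℂ) :
    gqspU (d + 1) lam phi th z =
      gqspU d lam phi th z * (gqspD z * gqspA (phi (d + 1)) (th (d + 1))) := by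
  simp [gqspU, List.range_succ, Matrix.mul_assoc]

theorem gqspU_hasSecondRowPhase (d : ℕ) (lam : ℝ) (phi th : ℕ → ℝ) {z : ℂ} (hz : ‖z‖ = 1) :
    HasSecondRowPhase (gqspU d lam phi th z) ((-1 : ℂ) ^ d * z ^ d *
      Complex.exp (Complex.I * (((lam + ∑ j ∈ Finset.range (d + 1), phi j : ℝ)) : ℂ))) := by
  induction d with
  | zero =>
    simpa [gqspU_zero] using gqspA0_hasSecondRowPhase lam (phi 0) (th 0)
  | succ d ih =>
    have hphase : (-1 : ℂ) ^ (d + 1) * z ^ (d + 1) *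
        Complex.exp (Complex.I * (((lam + ∑ j ∈ Finset.range (d + 2), phi j : ℝ)) : ℂ)) =
        -((-1 : ℂ) ^ d * z ^ d *
          Complex.exp (Complex.I * (((lam + ∑ j ∈ Finset.range (d + 1), phi j : ℝ)) : ℂ)) *
          (z * Complex.exp (Complex.I * (phi (d + 1) : ℂ)))) := by
      rw [Finset.sum_range_succ (n := d + 1), ← add_assoc, Complex.ofReal_add, mul_add,
        Complex.exp_add]
      ring
    rw [gqspU_succ, hphase]
    refine ih.mul (gqspD_mul_gqspA_hasSecondRowPhase hz _ _)
      (Complex.star_mul_self_eq_one ?_)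
    rw [norm_mul, hz, Complex.norm_exp_I_mul_ofReal, one_mul]

theorem gqsp_second_row_general
    (d : ℕ) (lam : ℝ) (th phi : ℕ → ℝ)
    (u : ℂ → ℂ)
    (hu : ∀ z : ℂ, u z = (-1 : ℂ) ^ d * z ^ d *
      Complex.exp (Complex.I * (((lam + ∑ j ∈ Finset.range (d + 1), phi j : ℝ)) : ℂ))) :
    ∀ z : ℂ, ‖z‖ = 1 →
      gqspU d lam phi th z 1 0 = u z * starRingEnd ℂ (gqspU d lam phi th z 0 1) ∧
      gqspU d lam phi th z 1 1 = -(u z * starRingEnd ℂ (gqspU d lam phi th z 0 0)) := by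
  intro z hz
  rw [hu z]
  exact gqspU_hasSecondRowPhase d lam phi th hz

/-- **Precise form of the second row of the GQSP matrix** (Proposition 2). With
`u(z) = (−1)^d z^d e^{i(λ + φ₀ + ⋯ + φ_d)}`, for every `z ∈ 𝕋` the `(2,1)` entry of
`U(z)` equals `u(z) conj(U(z)₁₂)` and the `(2,2)` entry equals `−u(z) conj(U(z)₁₁)`. -/
theorem gqsp_second_row
    (d : ℕ) (hd : 1 ≤ d) (lam : ℝ) (th phi : ℕ → ℝ)
    (u : ℂ → ℂ)
    (hu : ∀ z : ℂ, u z = (-1 : ℂ) ^ d * z ^ d *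
      Complex.exp (Complex.I * (((lam + ∑ j ∈ Finset.range (d + 1), phi j : ℝ)) : ℂ))) :
    ∀ z : ℂ, ‖z‖ = 1 →
      gqspU d lam phi th z 1 0 = u z * starRingEnd ℂ (gqspU d lam phi th z 0 1) ∧
      gqspU d lam phi th z 1 1 = -(u z * starRingEnd ℂ (gqspU d lam phi th z 0 0)) :=
  gqsp_second_row_general d lam th phi u hu
end
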